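/- Let 𝕜 = (k_n) ∈ Δ. For any r ∈ ℕ and any ℓ₁, …, ℓ_r ∈ ℤ, the characteristic function of μ_𝕜 is multiplicative on block-diagonal arguments: μ̂_𝕜(diag(ϖ^{-ℓ₁}J, …, ϖ^{-ℓ_r}J, 0, 0, …)) = ∏_{i=1}^r μ̂_𝕜(diag(ϖ^{-ℓ_i}J, 0, 0, …)). -/

import Mathlib

/-!
Common setup: `F` is a non-discrete non-Archimedean locally compact field, encoded as a
nontrivially normed field which is ultrametric and locally compact.  Its ring of integers is
`O_F = {x : F | ‖x‖ ≤ 1}`.  The condition `char F ≠ 2` is encoded as `(2 : F) ≠ 0`.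
-/

open MeasureTheory Metric Matrix
open scoped symmDiff ENNReal

noncomputable section
set_option linter.unusedSectionVars false

namespace SkewPaper

variable (F : Type) [NontriviallyNormedField F] [IsUltrametricDist F]
  [LocallyCompactSpace F] [SecondCountableTopology F] [MeasurableSpace F] [BorelSpace F]

/-- The infinite identity matrix. -/
def idM : ℕ → ℕ → F := fun i j => if i = j then 1 else 0

/-- Product of infinite matrices, defined via `tsum` (a finite sum whenever the supports
involved are finite, e.g. for matrices that are eventually the identity). -/
def mulInf (g h : ℕ → ℕ → F) : ℕ → ℕ → F := fun i j => ∑' k, g i k * h k j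

/-- All entries of `g` lie in the ring of integers `O_F = {x | ‖x‖ ≤ 1}`. -/
def IsIntegralM (g : ℕ → ℕ → F) : Prop := ∀ i j, ‖g i j‖ ≤ 1

/-- `g` coincides with the identity matrix outside a finite upper-left corner. -/
def EventuallyId (g : ℕ → ℕ → F) : Prop :=
  ∃ N, ∀ i j, N ≤ i ∨ N ≤ j → g i j = idM F i j

/-- The group `GL(∞, O_F)`: infinite matrices over `O_F`, eventually equal to the identity,
invertible with an inverse of the same kind. -/
def GLinf : Set (ℕ → ℕ → F) :=
  {g | IsIntegralM F g ∧ EventuallyId F g ∧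
    ∃ h, IsIntegralM F h ∧ EventuallyId F h ∧ mulInf F g h = idM F ∧ mulInf F h g = idM F}

/-- `A` is skew-symmetric: `A j i = - A i j` for all `i, j`. -/
def IsSkew (A : ℕ → ℕ → F) : Prop := ∀ i j, A j i = - A i j

/-- The space `Skew(ℕ, F)` of infinite skew-symmetric matrices over `F`. -/
def SkewSet : Set (ℕ → ℕ → F) := {A | IsSkew F A}

/-- `Skew(ℕ, F)` as a topological/measurable space. -/
abbrev SkewM := ↥(SkewSet F)

/-- `A` is symmetric. -/
def IsSym (A : ℕ → ℕ → F) : Prop := ∀ i j, A j i = A i j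

/-- The space `Sym(ℕ, F)` of infinite symmetric matrices over `F`. -/
def SymSet : Set (ℕ → ℕ → F) := {A | IsSym F A}

/-- `Sym(ℕ, F)` as a topological/measurable space. -/
abbrev SymM := ↥(SymSet F)

/-- The action `A ↦ g A gᵗ` of `GL(∞, O_F)` on `Skew(ℕ, F)`:
`(g A gᵗ)_{ij} = ∑_{k,l} g_{ik} g_{jl} A_{kl}`. -/
def skewAct (g : ℕ → ℕ → F) (A : SkewM F) : SkewM F :=
  ⟨fun i j => ∑' p : ℕ × ℕ, g i p.1 * g j p.2 * A.1 p.1 p.2, by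
    intro i j
    have h1 : (∑' p : ℕ × ℕ, g j p.1 * g i p.2 * A.1 p.1 p.2)
        = ∑' p : ℕ × ℕ, g j p.2 * g i p.1 * A.1 p.2 p.1 :=
      ((Equiv.prodComm ℕ ℕ).tsum_eq (fun p : ℕ × ℕ => g j p.1 * g i p.2 * A.1 p.1 p.2)).symm
    have h2 : (∑' p : ℕ × ℕ, g j p.2 * g i p.1 * A.1 p.2 p.1)
        = ∑' p : ℕ × ℕ, - (g i p.1 * g j p.2 * A.1 p.1 p.2) := by
      refine tsum_congr fun p => ?_
      rw [A.2 p.1 p.2]; ring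
    simp only [h1, h2, tsum_neg]⟩

/-- The action `A ↦ g A gᵗ` of `GL(∞, O_F)` on `Sym(ℕ, F)`. -/
def symAct (g : ℕ → ℕ → F) (A : SymM F) : SymM F :=
  ⟨fun i j => ∑' p : ℕ × ℕ, g i p.1 * g j p.2 * A.1 p.1 p.2, by
    intro i j
    have h1 : (∑' p : ℕ × ℕ, g j p.1 * g i p.2 * A.1 p.1 p.2)
        = ∑' p : ℕ × ℕ, g j p.2 * g i p.1 * A.1 p.2 p.1 :=
      ((Equiv.prodComm ℕ ℕ).tsum_eq (fun p : ℕ × ℕ => g j p.1 * g i p.2 * A.1 p.1 p.2)).symm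
    have h2 : (∑' p : ℕ × ℕ, g j p.2 * g i p.1 * A.1 p.2 p.1)
        = ∑' p : ℕ × ℕ, g i p.1 * g j p.2 * A.1 p.1 p.2 := by
      refine tsum_congr fun p => ?_
      rw [A.2 p.1 p.2]; ring
    simp only [h1, h2]⟩

/-- A Borel probability measure on `Skew(ℕ, F)` is `GL(∞, O_F)`-invariant. -/
def IsInvSkew (μ : Measure (SkewM F)) : Prop :=
  ∀ g ∈ GLinf F, μ.map (skewAct F g) = μ

/-- A Borel measure on `Skew(ℕ, F)` is ergodic for the `GL(∞, O_F)`-action: any Borel set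
`E` with `μ(E ∆ gE) = 0` for all `g` has measure `0` or `1`. -/
def IsErgSkew (μ : Measure (SkewM F)) : Prop :=
  ∀ E : Set (SkewM F), MeasurableSet E →
    (∀ g ∈ GLinf F, μ (E ∆ (skewAct F g ⁻¹' E)) = 0) → μ E = 0 ∨ μ E = 1

/-- A Borel probability measure on `Mat(ℕ, F)` is `GL(∞, O_F) × GL(∞, O_F)`-invariant
(for the action `(g₁, g₂) · X = g₁ X g₂⁻¹`; equivalently, `X ↦ g₁ X g₂` preserves `σ` for
all `g₁, g₂ ∈ GL(∞, O_F)`). -/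
def IsInvMat (σ : Measure (ℕ → ℕ → F)) : Prop :=
  ∀ g₁ ∈ GLinf F, ∀ g₂ ∈ GLinf F,
    σ.map (fun X => mulInf F (mulInf F g₁ X) g₂) = σ

/-- A Borel probability measure on `Sym(ℕ, F)` is `GL(∞, O_F)`-invariant. -/
def IsInvSym (μ : Measure (SymM F)) : Prop :=
  ∀ g ∈ GLinf F, μ.map (symAct F g) = μ

/-- The map `τ(X) = X - Xᵗ` from `Mat(ℕ, F)` to `Skew(ℕ, F)`. -/
def tauMap (X : ℕ → ℕ → F) : SkewM F :=
  ⟨fun i j => X i j - X j i, by intro i j; ring⟩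

/-- The map `X ↦ X + Xᵗ` from `Mat(ℕ, F)` to `Sym(ℕ, F)`. -/
def sigmaMap (X : ℕ → ℕ → F) : SymM F :=
  ⟨fun i j => X i j + X j i, by intro i j; ring⟩

/-! ### The parameter space `Δ` and the measures `μ_𝕜` -/

/-- Topologize `ℤ ∪ {-∞}` by its order topology: integer points are isolated and the
intervals `[-∞, a)` form a neighbourhood basis of `-∞`. -/
instance : TopologicalSpace (WithBot ℤ) := Preorder.topology _
instance : OrderTopology (WithBot ℤ) := ⟨rfl⟩

/-- The space `Δ` of nonincreasing sequences `(k_j)` with `k_j ∈ ℤ ∪ {-∞}`, topologized as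
a subspace of the product `(ℤ ∪ {-∞})^ℕ`. -/
abbrev DeltaSet := {k : ℕ → WithBot ℤ // Antitone k}

/-- `ppow ϖ m = ϖ^(-m)`, with the convention `ϖ^(-(-∞)) = ϖ^∞ = 0`. -/
def ppow (ϖ : F) : WithBot ℤ → F := fun m => WithBot.recBotCoe 0 (fun z : ℤ => ϖ ^ (-z)) m

/-- The limit `k = lim_n k_n` of a nonincreasing sequence in `ℤ ∪ {-∞}` (its infimum). -/
def klim (k : ℕ → WithBot ℤ) : WithBot ℤ := ⨅ n, k n

/-- The sample space carrying the independent uniform random variables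
`X_i^{(n)} = ω (0, n, i)`, `Y_i^{(n)} = ω (1, n, i)` and `Z_{ij} = ω (2, i, j)`. -/
abbrev SampleSpace := (Fin 3 × ℕ × ℕ) → F

/-- The random infinite skew-symmetric matrix
`A_𝕜 = ∑_{n : k_n > k} ϖ^{-k_n} [X_i^{(n)} Y_j^{(n)} - X_j^{(n)} Y_i^{(n)}]_{i,j} + ϖ^{-k} Z`
of Definition 1.1. -/
def Amat (ϖ : F) (k : ℕ → WithBot ℤ) (ω : SampleSpace F) : ℕ → ℕ → F := fun i j =>
  (∑' n : ℕ, if klim k < k n then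
      ppow F ϖ (k n) * (ω (0, n, i) * ω (1, n, j) - ω (0, n, j) * ω (1, n, i)) else 0)
  + ppow F ϖ (klim k) *
      (if i < j then ω (2, i, j) else if j < i then - ω (2, j, i) else 0)

lemma Amat_isSkew (ϖ : F) (k : ℕ → WithBot ℤ) (ω : SampleSpace F) :
    Amat F ϖ k ω ∈ SkewSet F := by
  intro i j
  unfold Amat
  have h1 : (∑' n : ℕ, if klim k < k n then
      ppow F ϖ (k n) * (ω (0, n, j) * ω (1, n, i) - ω (0, n, i) * ω (1, n, j)) else 0)
      = ∑' n : ℕ, - (if klim k < k n then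
      ppow F ϖ (k n) * (ω (0, n, i) * ω (1, n, j) - ω (0, n, j) * ω (1, n, i)) else 0) := by
    refine tsum_congr fun n => ?_
    split <;> ring
  have h2 : (if j < i then ω (2, j, i) else if i < j then - ω (2, i, j) else 0)
      = - (if i < j then ω (2, i, j) else if j < i then - ω (2, j, i) else 0) := by
    rcases lt_trichotomy i j with h | h | h
    · simp [h, not_lt_of_gt h]
    · simp [h, lt_irrefl]
    · simp [h, not_lt_of_gt h]
  rw [h1, h2, tsum_neg]
  ring

/-- The random matrix `A_𝕜`, as a `Skew(ℕ, F)`-valued random variable. -/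
def AmatS (ϖ : F) (𝕜 : DeltaSet) (ω : SampleSpace F) : SkewM F :=
  ⟨Amat F ϖ 𝕜.1 ω, Amat_isSkew F ϖ 𝕜.1 ω⟩

/-- The measure `μ_𝕜`: the law of the random skew-symmetric matrix `A_𝕜`. -/
def muK (ϖ : F) (P : Measure (SampleSpace F)) (𝕜 : DeltaSet) : Measure (SkewM F) :=
  P.map (AmatS F ϖ 𝕜)

/-- `ν` is the uniform (normalized Haar) probability measure on the ring of integers
`O_F`: a probability measure carried by `O_F` and invariant under all translations by
elements of `O_F`. -/
def IsUnifO (ν : Measure F) : Prop :=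
  IsProbabilityMeasure ν ∧ ν {x : F | ¬ ‖x‖ ≤ 1} = 0 ∧
    ∀ a : F, ‖a‖ ≤ 1 → ν.map (fun x => a + x) = ν

/-- `P` is the joint law of countably many independent random variables, each sampled
uniformly from `O_F`. -/
def IsIIDUnifO (P : Measure (SampleSpace F)) : Prop :=
  IsProbabilityMeasure P ∧
  ProbabilityTheory.iIndepFun
    (fun idx => fun ω : SampleSpace F => ω idx) P ∧
  ∀ idx : Fin 3 × ℕ × ℕ, IsUnifO F (P.map (fun ω : SampleSpace F => ω idx))

/-- `ϖ` is a uniformizer of `F`: a generator of the maximal ideal `m = {x | ‖x‖ < 1}`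
of `O_F`. -/
def IsUniformizer (ϖ : F) : Prop :=
  ϖ ≠ 0 ∧ ‖ϖ‖ < 1 ∧ ∀ x : F, ‖x‖ < 1 → ∃ y : F, ‖y‖ ≤ 1 ∧ x = ϖ * y

/-- The residue field `O_F/m` has `q` elements; for the normalized absolute value this is
recorded by `‖ϖ‖ = q⁻¹`, together with the fact that the value group is `q^ℤ`. -/
def IsResidueCard (ϖ : F) (q : ℕ) : Prop :=
  1 < q ∧ ‖ϖ‖ = (q : ℝ)⁻¹ ∧ ∀ x : F, x ≠ 0 → ∃ m : ℤ, ‖x‖ = (q : ℝ) ^ m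

/-! ### Characteristic functions -/

/-- `tr(X · S)` for infinite matrices, via `tsum` (a finite sum when `X` has finitely many
nonzero entries). -/
def trPair (X S : ℕ → ℕ → F) : F := ∑' p : ℕ × ℕ, X p.1 p.2 * S p.2 p.1

/-- The characteristic function `μ̂(X) = ∫ χ(tr(X S)) dμ(S)` of a measure on `Skew(ℕ, F)`. -/
def charFunSkew (χ : AddChar F ℂ) (μ : Measure (SkewM F)) (X : ℕ → ℕ → F) : ℂ :=
  ∫ S, χ (trPair F X S.1) ∂μ

/-- The characteristic function `σ̂(X) = ∫ χ(tr(X M)) dσ(M)` of a measure on `Mat(ℕ, F)`. -/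
def charFunMat (χ : AddChar F ℂ) (σ : Measure (ℕ → ℕ → F)) (X : ℕ → ℕ → F) : ℂ :=
  ∫ M, χ (trPair F X M) ∂σ

/-- `χ` is a (continuous) additive character of `F` with `χ ≡ 1` on `O_F` and `χ`
nonconstant on `ϖ⁻¹ O_F`. -/
def IsGoodChar (ϖ : F) (χ : AddChar F ℂ) : Prop :=
  Continuous χ ∧ (∀ x : F, ‖x‖ ≤ 1 → χ x = 1) ∧ ∃ x : F, ‖ϖ * x‖ ≤ 1 ∧ χ x ≠ 1

/-! ### Finite matrices, Haar measures, orbital measures -/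

instance (m n : ℕ) : MeasurableSpace (Matrix (Fin m) (Fin n) F) :=
  inferInstanceAs (MeasurableSpace (Fin m → Fin n → F))

instance (m n : ℕ) : TopologicalSpace (Matrix (Fin m) (Fin n) F) :=
  inferInstanceAs (TopologicalSpace (Fin m → Fin n → F))

/-- The compact group `GL(n, O_F)` of `n × n` matrices over `O_F` whose inverse also has
entries in `O_F`. -/
def GLO (n : ℕ) : Set (Matrix (Fin n) (Fin n) F) :=
  {g | (∀ i j, ‖g i j‖ ≤ 1) ∧ ∃ h : Matrix (Fin n) (Fin n) F,
    (∀ i j, ‖h i j‖ ≤ 1) ∧ g * h = 1 ∧ h * g = 1}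

/-- `η` is the normalized Haar measure of the compact group `GL(n, O_F)`, viewed as a
measure on `n × n` matrices over `F`: a probability measure carried by `GL(n, O_F)`,
invariant under left and right translations by elements of `GL(n, O_F)`. -/
def IsHaarGL (n : ℕ) (η : Measure (Matrix (Fin n) (Fin n) F)) : Prop :=
  IsProbabilityMeasure η ∧ η (GLO F n)ᶜ = 0 ∧
    ∀ g ∈ GLO F n, η.map (fun x => g * x) = η ∧ η.map (fun x => x * g) = η

/-- `m` is the normalized Haar measure of the compact additive group `Mat(n, O_F)`, viewed
as a measure on `n × n` matrices over `F`. -/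
def IsHaarMat (n : ℕ) (m : Measure (Matrix (Fin n) (Fin n) F)) : Prop :=
  IsProbabilityMeasure m ∧ m {Y | ¬ ∀ i j, ‖Y i j‖ ≤ 1} = 0 ∧
    ∀ B : Matrix (Fin n) (Fin n) F, (∀ i j, ‖B i j‖ ≤ 1) → m.map (fun Y => B + Y) = m

/-- The matrix `J = [[0, 1], [-1, 0]]`. -/
def Jmat : Matrix (Fin 2) (Fin 2) F := !![0, 1; -1, 0]

/-- The function `Θ(x) = ∫_{Mat(2, O_F)} χ(x · tr(Y J Yᵗ J)) dY`, where `dY` is the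
normalized Haar measure `m2` of `Mat(2, O_F)`. -/
def Theta (χ : AddChar F ℂ) (m2 : Measure (Matrix (Fin 2) (Fin 2) F)) (x : F) : ℂ :=
  ∫ Y, χ (x * Matrix.trace (Y * Jmat F * Yᵀ * Jmat F)) ∂m2

/-- The block-diagonal skew-symmetric matrix `diag(x₁ J, …, xₙ J)` of size `2n × 2n`. -/
def bdiagJ (n : ℕ) (xs : Fin n → F) : Matrix (Fin (2 * n)) (Fin (2 * n)) F :=
  Matrix.of fun i j : Fin (2 * n) =>
    if (j : ℕ) = (i : ℕ) + 1 ∧ (i : ℕ) % 2 = 0 then xs ⟨(i : ℕ) / 2, by have := i.isLt; omega⟩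
    else if (i : ℕ) = (j : ℕ) + 1 ∧ (j : ℕ) % 2 = 0 then
      - xs ⟨(j : ℕ) / 2, by have := j.isLt; omega⟩
    else 0

/-- The infinite matrix `diag(x₀ J, …, x_{r-1} J, 0, 0, …)`. -/
def bdiagJInf (r : ℕ) (xs : ℕ → F) : ℕ → ℕ → F := fun i j =>
  if i < 2 * r ∧ j < 2 * r then
    (if j = i + 1 ∧ i % 2 = 0 then xs (i / 2)
     else if i = j + 1 ∧ j % 2 = 0 then - xs (j / 2) else 0)
  else 0

/-- Embedding of an `n × n` matrix in the upper-left corner of an infinite matrix,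
extended by the identity. -/
def embedG (n : ℕ) (g : Matrix (Fin n) (Fin n) F) : ℕ → ℕ → F := fun i j =>
  if h : i < n ∧ j < n then g ⟨i, h.1⟩ ⟨j, h.2⟩ else idM F i j

/-- Embedding of an `n × n` matrix in the upper-left corner of an infinite matrix,
extended by zero. -/
def embedZ (n : ℕ) (A : Matrix (Fin n) (Fin n) F) : ℕ → ℕ → F := fun i j =>
  if h : i < n ∧ j < n then A ⟨i, h.1⟩ ⟨j, h.2⟩ else 0

lemma embedZ_isSkew (n : ℕ) (A : Matrix (Fin n) (Fin n) F) (hA : Aᵀ = -A) :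
    embedZ F n A ∈ SkewSet F := by
  intro i j
  unfold embedZ
  by_cases h : i < n ∧ j < n
  · have h' : j < n ∧ i < n := ⟨h.2, h.1⟩
    rw [dif_pos h, dif_pos h']
    have := congrFun (congrFun hA ⟨i, h.1⟩) ⟨j, h.2⟩
    simpa [Matrix.transpose_apply] using this
  · have h' : ¬ (j < n ∧ i < n) := fun hc => h ⟨hc.2, hc.1⟩
    rw [dif_neg h, dif_neg h', neg_zero]

/-- The orbital measure `m_n(A)`: the image of the normalized Haar measure `η` of
`GL(2n, O_F)` under `g ↦ g A gᵗ ∈ Skew(ℕ, F)` (with `A` in the upper-left corner). -/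
def orbital (n : ℕ) (η : Measure (Matrix (Fin (2 * n)) (Fin (2 * n)) F))
    (A : Matrix (Fin (2 * n)) (Fin (2 * n)) F) (hA : Aᵀ = -A) : Measure (SkewM F) :=
  η.map fun g => skewAct F (embedG F (2 * n) g) ⟨embedZ F (2 * n) A, embedZ_isSkew F _ A hA⟩

/-- The set of ergodic `GL(∞, O_F)`-invariant Borel probability measures on
`Skew(ℕ, F)`, inside the space of Borel probability measures with its weak topology. -/
def PergSkew : Set (ProbabilityMeasure (SkewM F)) :=
  {μ | IsInvSkew F (μ : Measure (SkewM F)) ∧ IsErgSkew F (μ : Measure (SkewM F))}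


/-- The set of `GL(∞,O_F) × GL(∞,O_F)`-invariant Borel probability measures on `Mat(ℕ, F)`,
with the weak topology. -/
def PinvMat : Set (ProbabilityMeasure (ℕ → ℕ → F)) :=
  {σ | IsInvMat F (σ : Measure (ℕ → ℕ → F))}

/-- The set of `GL(∞,O_F)`-invariant Borel probability measures on `Skew(ℕ, F)`,
with the weak topology. -/
def PinvSkew : Set (ProbabilityMeasure (SkewM F)) :=
  {μ | IsInvSkew F (μ : Measure (SkewM F))}

/-- The map `A ↦ (A(2i-1, 2i))_{i≥1}` (in 0-indexed form, `A ↦ (A(2i, 2i+1))_{i≥0}`). -/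
def cornerSeq (A : SkewM F) : ℕ → F := fun i => A.1 (2 * i) (2 * i + 1)

/-- The group `S(∞)` of finitely supported permutations of `ℕ`. -/
def SPermInf : Set (Equiv.Perm ℕ) := {π | ∃ N, ∀ n, N ≤ n → π n = n}

/-- A Borel measure on `F^ℕ` is invariant under `S(∞)` acting by permutations of
coordinates. -/
def IsInvSPerm (ν : Measure (ℕ → F)) : Prop :=
  ∀ π ∈ SPermInf, ν.map (fun x => x ∘ π) = ν

/-- The summand `(k + ℓ - ℓ₀) 𝟙_{k + ℓ ≥ ℓ₀}` (as an element of `[0, ∞]`; it vanishes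
when `k = -∞`). -/
def deltaTerm (ℓ₀ : ℕ) (ℓ : ℤ) (k : WithBot ℤ) : ℝ≥0∞ :=
  if (0 : WithBot ℤ) ≤ k + (((ℓ - (ℓ₀ : ℤ)) : ℤ) : WithBot ℤ) then
    ((WithBot.unbotD 0 (k + (((ℓ - (ℓ₀ : ℤ)) : ℤ) : WithBot ℤ))).toNat : ℝ≥0∞)
  else 0

/-- The infinite matrix `diag(x, y, 0, 0, …)`. -/
def diag2 (x y : F) : ℕ → ℕ → F := fun i j =>
  if i = 0 ∧ j = 0 then x else if i = 1 ∧ j = 1 then y else 0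

/-- The infinite matrix whose top-left `2 × 2` block is `x · J = [[0, x], [-x, 0]]` and
whose other entries vanish. -/
def JInf (x : F) : ℕ → ℕ → F := fun i j =>
  if i = 0 ∧ j = 1 then x else if i = 1 ∧ j = 0 then -x else 0

/-- The infinite matrix with `(1,1)`-entry `x` and all other entries `0`. -/
def e11 (x : F) : ℕ → ℕ → F := fun i j => if i = 0 ∧ j = 0 then x else 0

open ProbabilityTheory Filter Topology Function

/-!
For `X = diag(x₀J, …, x_{r-1}J, 0, …)` and skew `S` one has `tr(XS) = -2 ∑ᵢ xᵢ S(2i, 2i+1)`, so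
`χ(tr(X A_𝕜)) = ∏ᵢ χ(-2 xᵢ A_𝕜(2i, 2i+1))`. The entry `A_𝕜(2i, 2i+1)` only involves the
coordinates `X^{(n)}_m`, `Y^{(n)}_m`, `Z_{·m}` with `m ∈ {2i, 2i+1}`; these blocks are disjoint,
so the factors are independent and the expectation of the product splits. Finally, all
coordinates of the sample have the same law (an `O_F`-translation-invariant probability measure
carried by `O_F` is unique: `ν₁ = ν₂ ∗ ν₁ = ν₁ ∗ ν₂ = ν₂`), so the law of the sample is invariant
under permuting indices, and the permutation `0 ↔ 2i`, `1 ↔ 2i+1` carries `A_𝕜(0, 1)` to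
`A_𝕜(2i, 2i+1)`; hence each factor is `μ̂_𝕜(diag(xᵢJ, 0, …))`.
-/

lemma AddChar.map_finsetSum {A M ι : Type*} [AddCommMonoid A] [CommMonoid M] (χ : AddChar A M)
    (s : Finset ι) (g : ι → A) : χ (∑ i ∈ s, g i) = ∏ i ∈ s, χ (g i) :=
  map_prod χ.toMonoidHom (fun i => Multiplicative.ofAdd (g i)) s

lemma measurable_tsum_of_isUltrametricDist {Ω E : Type*} {_ : MeasurableSpace Ω}
    [NormedAddCommGroup E] [IsUltrametricDist E] [CompleteSpace E] [SecondCountableTopology E]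
    [MeasurableSpace E] [BorelSpace E] {g : ℕ → Ω → E} (hg : ∀ n, Measurable (g n)) :
    Measurable fun ω => ∑' n, g n ω := by
  -- In an ultrametric space the series converges exactly where its terms tend to `0`.
  set C := {ω | Tendsto (g · ω) atTop (𝓝 0)}
  have hC : MeasurableSet C := measurableSet_tendsto (𝓝 0) hg
  have hlim : ∀ ω, Tendsto (fun N => C.indicator (fun ω => ∑ n ∈ Finset.range N, g n ω) ω)
      atTop (𝓝 (∑' n, g n ω)) := by
    intro ω
    by_cases hω : ω ∈ C
    · simp only [Set.indicator_of_mem hω]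
      have : Summable (g · ω) := NonarchimedeanAddGroup.summable_of_tendsto_cofinite_zero
        (by rwa [Nat.cofinite_eq_atTop])
      exact this.hasSum.tendsto_sum_nat
    · simp only [Set.indicator_of_notMem hω,
        tsum_eq_zero_of_not_summable fun hs => hω hs.tendsto_atTop_zero]
      exact tendsto_const_nhds
  exact measurable_of_tendsto_metrizable
    (fun N => (Finset.measurable_sum _ fun n _ => hg n).indicator hC) (tendsto_pi_nhds.2 hlim)

lemma Measure.conv_eq_right_of_ae_map_add_eq {G : Type*} [AddCommMonoid G] [MeasurableSpace G]
    [MeasurableAdd₂ G] {μ ν : Measure G} [IsProbabilityMeasure ν] [SFinite μ]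
    (h : ∀ᵐ y ∂ν, μ.map (y + ·) = μ) : ν ∗ μ = μ := by
  refine Measure.ext_of_lintegral _ fun f hf => ?_
  calc ∫⁻ z, f z ∂(ν ∗ μ) = ∫⁻ y, ∫⁻ x, f (y + x) ∂μ ∂ν := Measure.lintegral_conv hf
    _ = ∫⁻ _, ∫⁻ x, f x ∂μ ∂ν := lintegral_congr_ae <| h.mono fun y hy => by
          dsimp only; rw [← lintegral_map hf (measurable_const_add y), hy]
    _ = ∫⁻ x, f x ∂μ := by simp

lemma integral_finset_prod_eq_prod_integral_of_iIndep {Ω ι κ 𝕜 : Type*} [RCLike 𝕜]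
    {mΩ : MeasurableSpace Ω} {μ : Measure Ω} [IsProbabilityMeasure μ]
    {m : ι → MeasurableSpace Ω} (h_le : ∀ i, m i ≤ mΩ) (h_indep : iIndep m μ)
    {B : κ → Set ι} (hB : Pairwise (Disjoint on B)) {f : κ → Ω → 𝕜}
    (hf : ∀ k, Measurable[⨆ i ∈ B k, m i] (f k)) (s : Finset κ) :
    ∫ ω, ∏ k ∈ s, f k ω ∂μ = ∏ k ∈ s, ∫ ω, f k ω ∂μ := by
  classical
  have hf_le : ∀ {S : Set ι}, (⨆ i ∈ S, m i) ≤ mΩ := iSup₂_le fun i _ => h_le i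
  induction s using Finset.induction_on with
  | empty => simp
  | insert a s ha ih =>
    have hs_meas : Measurable[⨆ i ∈ ⋃ k ∈ s, B k, m i] fun ω => ∏ k ∈ s, f k ω :=
      Finset.measurable_prod _ fun k hk => (hf k).mono
        (biSup_mono fun i hi => Set.mem_biUnion hk hi) le_rfl
    have hdisj : Disjoint (B a) (⋃ k ∈ s, B k) :=
      Set.disjoint_iUnion₂_right.2 fun k hk => hB (ne_of_mem_of_not_mem hk ha).symm
    have hindep : IndepFun (f a) (fun ω => ∏ k ∈ s, f k ω) μ := by
      rw [IndepFun_iff_Indep]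
      exact indep_of_indep_of_le_right (indep_of_indep_of_le_left
        (indep_iSup_of_disjoint h_le h_indep hdisj) (hf a).comap_le) hs_meas.comap_le
    simp_rw [Finset.prod_insert ha]
    rw [hindep.integral_fun_mul_eq_mul_integral
      ((hf a).mono hf_le le_rfl).aestronglyMeasurable
      (hs_meas.mono hf_le le_rfl).aestronglyMeasurable, ih]

lemma map_comp_perm_eq_of_iIndepFun {ι E : Type*} [MeasurableSpace E] {P : Measure (ι → E)}
    (hP : iIndepFun (fun i ω => ω i) P) (hid : ∀ i j, P.map (eval i) = P.map (eval j))
    (σ : Equiv.Perm ι) : P.map (fun ω => ω ∘ σ) = P := by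
  have := hP.isProbabilityMeasure
  set ν := fun i => P.map (eval i)
  have _ i : IsProbabilityMeasure (ν i) :=
    Measure.isProbabilityMeasure_map (measurable_pi_apply i).aemeasurable
  have hpi : P = Measure.infinitePi ν := by
    simpa using hP.map_fun_eq_infinitePi_map (fun i => measurable_pi_apply i)
  have hcomp : (fun ω : ι → E => ω ∘ σ) = MeasurableEquiv.piCongrLeft (fun _ => E) σ.symm := by
    ext ω i
    simp [MeasurableEquiv.piCongrLeft, Equiv.piCongrLeft_apply]
  have hν_perm : (fun i => ν (σ.symm i)) = ν := funext fun i => hid _ _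
  have := Measure.infinitePi_map_piCongrLeft ν σ.symm
  rw [hν_perm] at this
  rw [hcomp]
  conv_lhs => rw [hpi]
  rw [this, ← hpi]

lemma IsUnifO.conv_eq {μ ν : Measure F} (hμ : IsUnifO F μ) (hν : IsUnifO F ν) : ν ∗ μ = μ := by
  obtain ⟨_, -, hμ_inv⟩ := hμ
  obtain ⟨_, hν_supp, -⟩ := hν
  exact Measure.conv_eq_right_of_ae_map_add_eq (ae_iff.2 hν_supp |>.mono hμ_inv)

lemma IsUnifO.unique {ν₁ ν₂ : Measure F} (h₁ : IsUnifO F ν₁) (h₂ : IsUnifO F ν₂) : ν₁ = ν₂ := by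
  have := h₁.1
  have := h₂.1
  calc ν₁ = ν₂ ∗ ν₁ := (IsUnifO.conv_eq F h₁ h₂).symm
    _ = ν₁ ∗ ν₂ := Measure.conv_comm _ _
    _ = ν₂ := IsUnifO.conv_eq F h₂ h₁

/-- Relabels the column index `m` of `X^{(n)}_m, Y^{(n)}_m` and both indices of `Z` by `s`. -/
def sampleReindex (s : Equiv.Perm ℕ) : Equiv.Perm (Fin 3 × ℕ × ℕ) :=
  Equiv.prodShear (Equiv.refl _) fun a => Equiv.prodCongr (if a = 2 then s else 1) s

lemma Amat_comp_sampleReindex (ϖ : F) (k : ℕ → WithBot ℤ) (ω : SampleSpace F)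
    (s : Equiv.Perm ℕ) {i j : ℕ} (hij : i < j) (hs : s i < s j) :
    Amat F ϖ k (ω ∘ sampleReindex s) i j = Amat F ϖ k ω (s i) (s j) := by
  simp [Amat, sampleReindex, hij, hs]

lemma IsIIDUnifO.map_comp_perm {P : Measure (SampleSpace F)} (hP : IsIIDUnifO F P)
    (σ : Equiv.Perm (Fin 3 × ℕ × ℕ)) : P.map (· ∘ σ) = P :=
  map_comp_perm_eq_of_iIndepFun hP.2.1 (fun i j => IsUnifO.unique F (hP.2.2 i) (hP.2.2 j)) σ

lemma measurable_Amat_apply (ϖ : F) (k : ℕ → WithBot ℤ) (i j : ℕ) :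
    Measurable[⨆ idx ∈ {idx : Fin 3 × ℕ × ℕ | idx.2.2 = i ∨ idx.2.2 = j},
      MeasurableSpace.comap (fun ω : SampleSpace F => ω idx) inferInstance]
      fun ω => Amat F ϖ k ω i j := by
  have : ProperSpace F := ProperSpace.of_locallyCompactSpace F
  set m := ⨆ idx ∈ {idx : Fin 3 × ℕ × ℕ | idx.2.2 = i ∨ idx.2.2 = j},
    MeasurableSpace.comap (fun ω : SampleSpace F => ω idx) inferInstance
  have hcoord : ∀ a n l, (l = i ∨ l = j) → Measurable[m] fun ω : SampleSpace F => ω (a, n, l) :=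
    fun a n l hl => measurable_iff_comap_le.2 <| le_biSup
      (fun idx => MeasurableSpace.comap (fun ω : SampleSpace F => ω idx) inferInstance) hl
  refine Measurable.add (measurable_tsum_of_isUltrametricDist fun n => ?_)
    (Measurable.const_mul ?_ _)
  · split_ifs
    · exact (((hcoord _ _ _ (.inl rfl)).mul (hcoord _ _ _ (.inr rfl))).sub
        ((hcoord _ _ _ (.inr rfl)).mul (hcoord _ _ _ (.inl rfl)))).const_mul _
    · exact measurable_const
  · split_ifs
    · exact hcoord _ _ _ (.inr rfl)
    · exact (hcoord _ _ _ (.inl rfl)).neg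
    · exact measurable_const

lemma trPair_bdiagJInf (r : ℕ) (xs : ℕ → F) {S : ℕ → ℕ → F} (hS : IsSkew F S) :
    trPair F (bdiagJInf F r xs) S = ∑ i ∈ Finset.range r, -2 * xs i * S (2 * i) (2 * i + 1) := by
  classical
  let pos : ℕ × Fin 2 → ℕ × ℕ := fun p => (2 * p.1 + p.2, 2 * p.1 + 1 - p.2)
  have hpos : Injective pos := fun p q h => by
    simp only [pos, Prod.mk.injEq] at h
    ext <;> omega
  have hsupp : ∀ p ∉ (Finset.range r ×ˢ Finset.univ).image pos,
      bdiagJInf F r xs p.1 p.2 * S p.2 p.1 = 0 := by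
    rintro ⟨a, b⟩ hp
    simp only [Finset.mem_image, Finset.mem_product, Finset.mem_range, Finset.mem_univ, and_true,
      Prod.exists, pos, Prod.mk.injEq, not_exists, not_and] at hp
    have h0 := hp (a / 2) 0
    have h1 := hp (b / 2) 1
    simp only [Fin.val_zero, Fin.val_one] at h0 h1
    simp only [bdiagJInf]
    split_ifs <;> first | (exfalso; omega) | simp
  rw [trPair, tsum_eq_sum hsupp, Finset.sum_image hpos.injOn, Finset.sum_product]
  refine Finset.sum_congr rfl fun i hi => ?_
  rw [Finset.mem_range] at hi
  have hdiv : 2 * i / 2 = i := by omega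
  have e₁ : bdiagJInf F r xs (2 * i) (2 * i + 1) = xs i := by
    rw [bdiagJInf, if_pos ⟨by omega, by omega⟩, if_pos ⟨rfl, by omega⟩, hdiv]
  have e₂ : bdiagJInf F r xs (2 * i + 1) (2 * i) = -xs i := by
    rw [bdiagJInf, if_pos ⟨by omega, by omega⟩, if_neg (by omega), if_pos ⟨rfl, by omega⟩, hdiv]
  rw [Fin.sum_univ_two]
  show bdiagJInf F r xs (2 * i) (2 * i + 1) * S (2 * i + 1) (2 * i) +
    bdiagJInf F r xs (2 * i + 1) (2 * i) * S (2 * i) (2 * i + 1) = _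
  rw [e₁, e₂, hS]
  ring

lemma measurable_AmatS (ϖ : F) (𝕜 : DeltaSet) : Measurable (AmatS F ϖ 𝕜) :=
  Measurable.subtype_mk <| measurable_pi_lambda _ fun i => measurable_pi_lambda _ fun j =>
    (measurable_Amat_apply F ϖ 𝕜.1 i j).mono
      (iSup₂_le fun idx _ => (measurable_pi_apply idx).comap_le) le_rfl

lemma charFunSkew_muK_bdiagJInf (ϖ : F) (χ : AddChar F ℂ) (hχ : Continuous χ)
    (P : Measure (SampleSpace F)) (𝕜 : DeltaSet) (r : ℕ) (xs : ℕ → F) :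
    charFunSkew F χ (muK F ϖ P 𝕜) (bdiagJInf F r xs) =
      ∫ ω, ∏ i ∈ Finset.range r, χ (-2 * xs i * Amat F ϖ 𝕜.1 ω (2 * i) (2 * i + 1)) ∂P := by
  have hintegrand : (fun S : SkewM F => χ (trPair F (bdiagJInf F r xs) S.1)) =
      fun S => ∏ i ∈ Finset.range r, χ (-2 * xs i * S.1 (2 * i) (2 * i + 1)) := by
    ext S
    rw [trPair_bdiagJInf F r xs S.2, AddChar.map_finsetSum]
  have hmeas : Measurable fun S : SkewM F =>
      ∏ i ∈ Finset.range r, χ (-2 * xs i * S.1 (2 * i) (2 * i + 1)) :=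
    Finset.measurable_prod _ fun i _ => hχ.measurable.comp <| Measurable.const_mul
      (measurable_subtype_coe.eval.eval : Measurable fun S : SkewM F => S.1 (2 * i) (2 * i + 1))
      _
  rw [charFunSkew, hintegrand, muK, integral_map (measurable_AmatS F ϖ 𝕜).aemeasurable
    hmeas.aestronglyMeasurable]
  rfl

lemma identDistrib_Amat_apply_perm (ϖ : F) (k : ℕ → WithBot ℤ) {P : Measure (SampleSpace F)}
    (hP : IsIIDUnifO F P) (s : Equiv.Perm ℕ) {i j : ℕ} (hij : i < j) (hs : s i < s j) :
    IdentDistrib (fun ω => Amat F ϖ k ω (s i) (s j)) (fun ω => Amat F ϖ k ω i j) P P := by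
  have hA : Measurable fun ω => Amat F ϖ k ω i j := (measurable_Amat_apply F ϖ k i j).mono
      (iSup₂_le fun idx _ => (measurable_pi_apply idx).comap_le) le_rfl
  have hreindex : Measurable fun ω : SampleSpace F => ω ∘ sampleReindex s := by fun_prop
  have hcomp : (fun ω => Amat F ϖ k ω (s i) (s j)) =
      (fun ω => Amat F ϖ k ω i j) ∘ fun ω => ω ∘ sampleReindex s :=
    funext fun ω => (Amat_comp_sampleReindex F ϖ k ω s hij hs).symm
  refine ⟨?_, hA.aemeasurable, ?_⟩
  · rw [hcomp]
    exact (hA.comp hreindex).aemeasurable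
  · rw [hcomp, ← Measure.map_map hA hreindex, hP.map_comp_perm]

lemma identDistrib_Amat_corner (ϖ : F) (k : ℕ → WithBot ℤ) {P : Measure (SampleSpace F)}
    (hP : IsIIDUnifO F P) (i : ℕ) :
    IdentDistrib (fun ω => Amat F ϖ k ω (2 * i) (2 * i + 1)) (fun ω => Amat F ϖ k ω 0 1) P P := by
  let s : Equiv.Perm ℕ := (Equiv.swap 0 (2 * i)).trans (Equiv.swap 1 (2 * i + 1))
  have hs0 : s 0 = 2 * i := by
    rw [Equiv.trans_apply, Equiv.swap_apply_left]
    exact Equiv.swap_apply_of_ne_of_ne (by omega) (by omega)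
  have hs1 : s 1 = 2 * i + 1 := by
    rw [Equiv.trans_apply, Equiv.swap_apply_of_ne_of_ne (show (1 : ℕ) ≠ 0 by omega)
      (show 1 ≠ 2 * i by omega), Equiv.swap_apply_left]
  simpa [hs0, hs1] using identDistrib_Amat_apply_perm F ϖ k hP s zero_lt_one (by omega)

theorem charFun_muK_multiplicative (ϖ : F)
    (χ : AddChar F ℂ) (hχ : IsGoodChar F ϖ χ)
    (P : Measure (SampleSpace F)) (hP : IsIIDUnifO F P)
    (𝕜 : DeltaSet) (r : ℕ) (ℓ : ℕ → ℤ) :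
    charFunSkew F χ (muK F ϖ P 𝕜) (bdiagJInf F r fun m => ϖ ^ (-(ℓ m))) =
      ∏ i ∈ Finset.range r,
        charFunSkew F χ (muK F ϖ P 𝕜) (bdiagJInf F 1 fun _ => ϖ ^ (-(ℓ i))) := by
  have hχm : Measurable χ := hχ.1.measurable
  have := hP.1
  have hfactor : ∀ i, ∫ ω, χ (-2 * ϖ ^ (-(ℓ i)) * Amat F ϖ 𝕜.1 ω (2 * i) (2 * i + 1)) ∂P =
      charFunSkew F χ (muK F ϖ P 𝕜) (bdiagJInf F 1 fun _ => ϖ ^ (-(ℓ i))) := by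
    intro i
    simp only [charFunSkew_muK_bdiagJInf F ϖ χ hχ.1, Finset.prod_range_one, mul_zero, zero_add]
    exact ((identDistrib_Amat_corner F ϖ 𝕜.1 hP i).comp
      (hχm.comp (measurable_const_mul _))).integral_eq
  have hblocks : Pairwise (Disjoint on fun i : ℕ => {idx : Fin 3 × ℕ × ℕ |
      idx.2.2 = 2 * i ∨ idx.2.2 = 2 * i + 1}) := fun i j hij =>
    Set.disjoint_left.2 fun idx (hi : _ ∨ _) (hj : _ ∨ _) => hij (by omega)
  rw [charFunSkew_muK_bdiagJInf F ϖ χ hχ.1, integral_finset_prod_eq_prod_integral_of_iIndep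
    (fun idx => (measurable_pi_apply idx).comap_le) ((iIndepFun_iff_iIndep _ _ _).1 hP.2.1)
    hblocks (f := fun i ω => χ (-2 * ϖ ^ (-(ℓ i)) * Amat F ϖ 𝕜.1 ω (2 * i) (2 * i + 1)))
    (fun i => hχm.comp ((measurable_Amat_apply F ϖ 𝕜.1 _ _).const_mul _))]
  exact Finset.prod_congr rfl fun i _ => hfactor i

end SkewPaper
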